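/- arXiv:1212.2097 — 4 statements merged into one kernel-verified Lean document; each statement's English description precedes it below -/
import Mathlib

section
/- Let 𝔠 ⊆ 𝔤 be a reducing Lie subalgebra, i.e. [s♯α, s♯β] ∈ 𝔠 for all α, β ∈ ann(𝔠). Then the subset 𝔠̂ := {(ξ + s♯α, ξ − s♯α) : ξ ∈ 𝔠, α ∈ ann(𝔠)} is a Lie subalgebra of the direct-sum Lie algebra 𝔤 ⊕ 𝔤 (it is a linear subspace closed under the componentwise Lie bracket). -/
/-! Prod of Lie algebras, with componentwise bracket (the direct-sum Lie algebra 𝔤 ⊕ 𝔤). -/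

section ProdLie
variable {L M : Type*} [LieRing L] [LieRing M]

instance prodBracket : Bracket (L × M) (L × M) :=
  ⟨fun p q => (⁅p.1, q.1⁆, ⁅p.2, q.2⁆)⟩

@[simp] theorem prod_bracket_fst (p q : L × M) : ⁅p, q⁆.1 = ⁅p.1, q.1⁆ := rfl
@[simp] theorem prod_bracket_snd (p q : L × M) : ⁅p, q⁆.2 = ⁅p.2, q.2⁆ := rfl

instance prodLieRing : LieRing (L × M) where
  toBracket := prodBracket
  add_lie x y z := by ext <;> simp [add_lie]
  lie_add x y z := by ext <;> simp [lie_add]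
  lie_self x := by ext <;> simp
  leibniz_lie x y z := by
    ext <;> simp only [prod_bracket_fst, prod_bracket_snd, Prod.fst_add, Prod.snd_add] <;>
      exact leibniz_lie _ _ _

instance prodLieAlgebra {R : Type*} [CommRing R] [LieAlgebra R L] [LieAlgebra R M] :
    LieAlgebra R (L × M) where
  lie_smul t x y := by ext <;> simp

end ProdLie

/-- The coadjoint action of `𝔤` on `𝔤*`: `(ad*_ξ α)(η) = -α ⁅ξ, η⁆`. -/
noncomputable def coad {L : Type*} [LieRing L] [LieAlgebra ℝ L] (ξ : L)
    (α : Module.Dual ℝ L) : Module.Dual ℝ L :=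
  - (α ∘ₗ (LieAlgebra.ad ℝ L ξ))

theorem lie_add_add_eq {L : Type*} [LieRing L] (ξ η a b : L) :
    ⁅ξ + a, η + b⁆ = (⁅ξ, η⁆ + ⁅a, b⁆) + (⁅ξ, b⁆ - ⁅η, a⁆) := by
  rw [add_lie, lie_add, lie_add, ← lie_skew η a]
  abel

theorem lie_sub_sub_eq {L : Type*} [LieRing L] (ξ η a b : L) :
    ⁅ξ - a, η - b⁆ = (⁅ξ, η⁆ + ⁅a, b⁆) - (⁅ξ, b⁆ - ⁅η, a⁆) := by
  rw [sub_lie, lie_sub, lie_sub, ← lie_skew η a]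
  abel

section Hat

variable {R L : Type*} [CommRing R] [AddCommGroup L] [Module R L]

def hatMap (s : Module.Dual R L →ₗ[R] L) : L × Module.Dual R L →ₗ[R] L × L :=
  (LinearMap.fst R L _ + s ∘ₗ LinearMap.snd R L _).prod
    (LinearMap.fst R L _ - s ∘ₗ LinearMap.snd R L _)

/-- The paper's `𝔠̂ ⊆ 𝔤 ⊕ 𝔤`. -/
def Submodule.hat (s : Module.Dual R L →ₗ[R] L) (c : Submodule R L) : Submodule R (L × L) :=
  (c.prod c.dualAnnihilator).map (hatMap s)

theorem Submodule.mem_hat {s : Module.Dual R L →ₗ[R] L} {c : Submodule R L} {p : L × L} :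
    p ∈ c.hat s ↔ ∃ ξ ∈ c, ∃ α : Module.Dual R L, (∀ x ∈ c, α x = 0) ∧ p = (ξ + s α, ξ - s α) := by
  simp only [Submodule.hat, Submodule.mem_map, Submodule.mem_prod, Submodule.mem_dualAnnihilator,
    Prod.exists]
  constructor
  · rintro ⟨ξ, α, ⟨hξ, hα⟩, rfl⟩
    exact ⟨ξ, hξ, α, hα, rfl⟩
  · rintro ⟨ξ, hξ, α, hα, rfl⟩
    exact ⟨ξ, α, ⟨hξ, hα⟩, rfl⟩

end Hat

section Reducing

variable {L : Type*} [LieRing L] [LieAlgebra ℝ L]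

theorem coad_mem_dualAnnihilator {c : LieSubalgebra ℝ L} {ξ : L} (hξ : ξ ∈ c)
    {α : Module.Dual ℝ L} (hα : α ∈ c.toSubmodule.dualAnnihilator) :
    coad ξ α ∈ c.toSubmodule.dualAnnihilator := by
  rw [Submodule.mem_dualAnnihilator] at hα ⊢
  intro x hx
  simp [coad, hα _ (c.lie_mem hξ hx)]

/-- The bracket of `(ξ + s♯α, ξ - s♯α)` and `(η + s♯β, η - s♯β)` is the element of `𝔠̂` with
parameters `⁅ξ, η⁆ + ⁅s♯α, s♯β⁆ ∈ 𝔠` and `ad*_ξ β - ad*_η α ∈ ann(𝔠)`. -/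
theorem lie_mem_hat (s : Module.Dual ℝ L →ₗ[ℝ] L)
    (hinv : ∀ (ξ : L) (α : Module.Dual ℝ L), ⁅ξ, s α⁆ = s (coad ξ α))
    (c : LieSubalgebra ℝ L)
    (hred : ∀ α β : Module.Dual ℝ L, (∀ x ∈ c, α x = 0) → (∀ x ∈ c, β x = 0) →
      ⁅s α, s β⁆ ∈ c)
    {p q : L × L} (hp : p ∈ c.toSubmodule.hat s) (hq : q ∈ c.toSubmodule.hat s) :
    ⁅p, q⁆ ∈ c.toSubmodule.hat s := by
  rcases hp with ⟨⟨ξ, α⟩, ⟨hξ, hα⟩, rfl⟩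
  rcases hq with ⟨⟨η, β⟩, ⟨hη, hβ⟩, rfl⟩
  have hξη : ⁅ξ, η⁆ + ⁅s α, s β⁆ ∈ c :=
    c.add_mem (c.lie_mem hξ hη) (hred α β ((Submodule.mem_dualAnnihilator _).1 hα)
      ((Submodule.mem_dualAnnihilator _).1 hβ))
  have hcoad : coad ξ β - coad η α ∈ c.toSubmodule.dualAnnihilator :=
    sub_mem (coad_mem_dualAnnihilator hξ hβ) (coad_mem_dualAnnihilator hη hα)
  refine ⟨(_, _), ⟨hξη, hcoad⟩, ?_⟩
  ext
  · show ⁅ξ, η⁆ + ⁅s α, s β⁆ + s (coad ξ β - coad η α) = ⁅ξ + s α, η + s β⁆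
    rw [lie_add_add_eq, map_sub, hinv ξ β, hinv η α]
  · show ⁅ξ, η⁆ + ⁅s α, s β⁆ - s (coad ξ β - coad η α) = ⁅ξ - s α, η - s β⁆
    rw [lie_sub_sub_eq, map_sub, hinv ξ β, hinv η α]

end Reducing

theorem reducing_hat_isLieSubalgebra_general {L : Type*} [LieRing L] [LieAlgebra ℝ L]
    (s : Module.Dual ℝ L →ₗ[ℝ] L)
    (hinv : ∀ (ξ : L) (α : Module.Dual ℝ L), ⁅ξ, s α⁆ = s (coad ξ α))
    (c : LieSubalgebra ℝ L)
    (hred : ∀ α β : Module.Dual ℝ L, (∀ x ∈ c, α x = 0) → (∀ x ∈ c, β x = 0) →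
      ⁅s α, s β⁆ ∈ c) :
    ∃ K : LieSubalgebra ℝ (L × L),
      (K : Set (L × L)) =
        {p : L × L | ∃ ξ ∈ c, ∃ α : Module.Dual ℝ L,
          (∀ x ∈ c, α x = 0) ∧ p = (ξ + s α, ξ - s α)} :=
  ⟨{ toSubmodule := c.toSubmodule.hat s
     lie_mem' := lie_mem_hat s hinv c hred },
    Set.ext fun _ => Submodule.mem_hat⟩

/-- If `𝔠 ⊆ 𝔤` is a reducing Lie subalgebra, then
`𝔠̂ = {(ξ + s♯α, ξ − s♯α) : ξ ∈ 𝔠, α ∈ ann(𝔠)}` is a Lie subalgebra of `𝔤 ⊕ 𝔤`. -/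
theorem reducing_hat_isLieSubalgebra {L : Type*} [LieRing L] [LieAlgebra ℝ L]
    (s : Module.Dual ℝ L →ₗ[ℝ] L)
    (hsym : ∀ α β : Module.Dual ℝ L, β (s α) = α (s β))
    (hinv : ∀ (ξ : L) (α : Module.Dual ℝ L), ⁅ξ, s α⁆ = s (coad ξ α))
    (c : LieSubalgebra ℝ L)
    (hred : ∀ α β : Module.Dual ℝ L, (∀ x ∈ c, α x = 0) → (∀ x ∈ c, β x = 0) →
      ⁅s α, s β⁆ ∈ c) :
    ∃ K : LieSubalgebra ℝ (L × L),
      (K : Set (L × L)) =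
        {p : L × L | ∃ ξ ∈ c, ∃ α : Module.Dual ℝ L,
          (∀ x ∈ c, α x = 0) ∧ p = (ξ + s α, ξ - s α)} :=
  reducing_hat_isLieSubalgebra_general s hinv c hred
end

section
/- Every coisotropic Lie subalgebra is reducing: if 𝔠 ⊆ 𝔤 is a Lie subalgebra with s♯(ann(𝔠)) ⊆ 𝔠, then [s♯α, s♯β] ∈ 𝔠 for all α, β ∈ ann(𝔠). -/
/-- Every coisotropic Lie subalgebra is reducing: if `s♯(ann 𝔠) ⊆ 𝔠` then
`[s♯α, s♯β] ∈ 𝔠` for all `α, β ∈ ann 𝔠`. -/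
theorem coisotropic_is_reducing {L : Type*} [LieRing L] [LieAlgebra ℝ L]
    (s : Module.Dual ℝ L →ₗ[ℝ] L)
    (hsym : ∀ α β : Module.Dual ℝ L, β (s α) = α (s β))
    (hinv : ∀ (ξ : L) (α : Module.Dual ℝ L), ⁅ξ, s α⁆ = s (coad ξ α))
    (c : LieSubalgebra ℝ L)
    (hcois : ∀ α : Module.Dual ℝ L, (∀ x ∈ c, α x = 0) → s α ∈ c) :
    ∀ α β : Module.Dual ℝ L, (∀ x ∈ c, α x = 0) → (∀ x ∈ c, β x = 0) →
      ⁅s α, s β⁆ ∈ c := by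
  intro α β hα hβ
  have hsa : s α ∈ c := hcois α hα
  rw [hinv (s α) β]
  apply hcois
  intro x hx
  have : ⁅s α, x⁆ ∈ c := c.lie_mem hsa hx
  simp [coad, hβ _ this]
end

section
/- Let a group G act on sets X and S, let μ : X → S be a G-equivariant map, let T ⊆ S be a subset, and let N ≤ G be a subgroup such that N·T ⊆ T and such that for all g ∈ G and t ∈ T, g·t ∈ T implies g ∈ N. Then the inclusion μ⁻¹(T) ↪ μ⁻¹(G·T) induces a bijection from the orbit space μ⁻¹(T)/N onto the orbit space μ⁻¹(G·T)/G, where G·T := {g·t : g ∈ G, t ∈ T}. -/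
/-- Let `G` act on `X` and `S`, `μ : X → S` equivariant, `T ⊆ S` and `N ≤ G` a subgroup
with `N·T ⊆ T` and such that `g·t ∈ T` for `t ∈ T` forces `g ∈ N`. Then the inclusion
`μ⁻¹(T) ↪ μ⁻¹(G·T)` induces a bijection `μ⁻¹(T)/N ≃ μ⁻¹(G·T)/G`. -/
theorem slice_reduction_bijection {G X S : Type*} [Group G]
    [MulAction G X] [MulAction G S]
    (μ : X → S) (hμ : ∀ (g : G) (x : X), μ (g • x) = g • μ x)
    (T : Set S) (N : Subgroup G)
    (hNT : ∀ n : N, ∀ t ∈ T, (n : G) • t ∈ T)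
    (hN : ∀ g : G, ∀ t ∈ T, g • t ∈ T → g ∈ N) :
    ∃ f : Quot (fun a b : (μ ⁻¹' T : Set X) => ∃ n ∈ N, n • (a : X) = b) →
          Quot (fun a b : (μ ⁻¹' {s : S | ∃ g : G, ∃ t ∈ T, g • t = s} : Set X) =>
            ∃ g : G, g • (a : X) = b),
      Function.Bijective f ∧
      ∀ (x : X) (hx : x ∈ (μ ⁻¹' T : Set X)),
        f (Quot.mk _ ⟨x, hx⟩) =
          Quot.mk _ ⟨x, show x ∈ (μ ⁻¹' {s : S | ∃ g : G, ∃ t ∈ T, g • t = s} : Set X) by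
            exact ⟨1, μ x, hx, one_smul G (μ x)⟩⟩ := by
  set GT : Set S := {s : S | ∃ g : G, ∃ t ∈ T, g • t = s} with hGT
  have hsub : ∀ x : X, x ∈ (μ ⁻¹' T : Set X) → x ∈ (μ ⁻¹' GT : Set X) := by
    intro x hx
    exact ⟨1, μ x, hx, one_smul G (μ x)⟩
  refine ⟨Quot.lift (fun a => Quot.mk _ (⟨a.1, hsub a.1 a.2⟩ :
      (μ ⁻¹' GT : Set X))) ?_, ?_, ?_⟩
  · rintro a b ⟨n, hn, hab⟩
    exact Quot.sound ⟨n, hab⟩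
  · constructor
    · -- injective
      rintro ⟨a⟩ ⟨b⟩ h
      have h' : ∀ c d : (μ ⁻¹' GT : Set X),
          (∃ g : G, g • (c : X) = d) → c.1 ∈ μ ⁻¹' T → d.1 ∈ μ ⁻¹' T →
          ∃ n ∈ N, n • (c : X) = d := by
        rintro c d ⟨g, hg⟩ hc hd
        refine ⟨g, ?_, hg⟩
        apply hN g (μ c.1) hc
        rw [← hμ, hg]; exact hd
      have heq : Equivalence (fun c d : (μ ⁻¹' GT : Set X) =>
          ∃ g : G, g • (c : X) = d) := by
        constructor
        · intro c; exact ⟨1, one_smul G c.1⟩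
        · rintro c d ⟨g, hg⟩; exact ⟨g⁻¹, by rw [← hg, inv_smul_smul]⟩
        · rintro c d e ⟨g, hg⟩ ⟨g', hg'⟩
          exact ⟨g' * g, by rw [mul_smul, hg, hg']⟩
      have hr := (heq.eqvGen_iff).mp (Quot.eqvGen_exact h)
      have := h' _ _ hr a.2 b.2
      exact Quot.sound this
    · -- surjective
      rintro ⟨x⟩
      obtain ⟨g, t, ht, hgt⟩ := x.2
      have hx' : (g⁻¹ • (x : X)) ∈ (μ ⁻¹' T : Set X) := by
        show μ (g⁻¹ • (x : X)) ∈ T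
        rw [hμ, ← hgt, inv_smul_smul]; exact ht
      refine ⟨Quot.mk _ ⟨g⁻¹ • (x : X), hx'⟩, ?_⟩
      apply Quot.sound
      exact ⟨g, smul_inv_smul g x.1⟩
  · intro x hx; rfl
end

section
/- Let 𝔤 be a finite-dimensional real Lie algebra with a nondegenerate invariant symmetric bilinear form B (invariance: B([ξ, η], ζ) + B(η, [ξ, ζ]) = 0 for all ξ, η, ζ). Let 𝔭₊, 𝔭₋ ⊆ 𝔤 be Lie subalgebras whose B-orthogonal complements satisfy 𝔭₊^⊥ = 𝔲₊ ⊆ 𝔭₊ and 𝔭₋^⊥ = 𝔲₋ ⊆ 𝔭₋, set 𝔥 := 𝔭₊ ∩ 𝔭₋, and assume 𝔤 = 𝔲₊ ⊕ 𝔥 ⊕ 𝔲₋ as vector spaces. Equip the direct-sum Lie algebra 𝔥 ⊕ 𝔤 with the bilinear form B̃((x, y), (x', y')) := B(x, x') − B(y, y'). Then for each sign ±, the set 𝔠± := {(x, y) ∈ 𝔥 ⊕ 𝔤 : y − x ∈ 𝔲±} is a Lie subalgebra of 𝔥 ⊕ 𝔤, and the B̃-orthogonal complement of 𝔠± is contained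 in 𝔠± (i.e. 𝔠± is coisotropic with respect to B̃). -/
theorem le_sup_of_inf_le_of_le_sup {α : Type*} [Lattice α] [IsModularLattice α] {a h b p : α}
    (hap : a ≤ p) (hhp : h ≤ p) (hpb : p ⊓ b ≤ h) (hp : p ≤ a ⊔ h ⊔ b) : p ≤ a ⊔ h :=
  calc p = (a ⊔ h ⊔ b) ⊓ p := (inf_eq_right.mpr hp).symm
    _ = a ⊔ h ⊔ b ⊓ p := sup_inf_assoc_of_le b (sup_le hap hhp)
    _ ≤ a ⊔ h := sup_le le_rfl (le_sup_of_le_right (inf_comm b p ▸ hpb))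

section Fission

variable {R L : Type*} [CommRing R] [LieRing L] [LieAlgebra R L]
  {B : LinearMap.BilinForm R L} {p H : LieSubalgebra R L} {u : Submodule R L}

theorem lie_mem_of_mem_orthogonal (hBinv : ∀ ξ η ζ : L, B ⁅ξ, η⁆ ζ + B η ⁅ξ, ζ⁆ = 0)
    (hu : ∀ x, x ∈ u ↔ ∀ q ∈ p, B x q = 0) {x y : L} (hx : x ∈ p) (hy : y ∈ u) :
    ⁅x, y⁆ ∈ u := by
  rw [hu] at hy ⊢
  intro q hq
  simpa [hy _ (p.lie_mem hx hq)] using hBinv x y q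

theorem lie_sub_lie_mem (hideal : ∀ x ∈ p, ∀ y ∈ u, ⁅x, y⁆ ∈ u) (hup : u ≤ p.toSubmodule)
    {x x' y y' : L} (hx : x ∈ p) (hx' : x' ∈ p) (hy : y - x ∈ u) (hy' : y' - x' ∈ u) :
    ⁅y, y'⁆ - ⁅x, x'⁆ ∈ u := by
  have hy'p : y' ∈ p := by simpa using p.add_mem (hup hy') hx'
  have hsplit : ⁅y, y'⁆ - ⁅x, x'⁆ = -⁅y', y - x⁆ + ⁅x, y' - x'⁆ := by
    simp only [lie_sub, ← lie_skew y' y, ← lie_skew y' x]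
    abel
  rw [hsplit]
  exact u.add_mem (u.neg_mem (hideal _ hy'p _ hy)) (hideal _ hx _ hy')

variable (H u) in
/-- The paper's `𝔠 = {(x, y) ∈ 𝔥 ⊕ 𝔤 | y - x ∈ 𝔲}`. -/
def fissionSubmodule : Submodule R (H × L) :=
  u.comap (LinearMap.snd R H L - (H.incl : H →ₗ[R] L) ∘ₗ LinearMap.fst R H L)

@[simp]
theorem mem_fissionSubmodule {P : H × L} : P ∈ fissionSubmodule H u ↔ P.2 - P.1 ∈ u :=
  Iff.rfl

variable (B) in
def fissionSubalgebra (hBinv : ∀ ξ η ζ : L, B ⁅ξ, η⁆ ζ + B η ⁅ξ, ζ⁆ = 0)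
    (hu : ∀ x, x ∈ u ↔ ∀ q ∈ p, B x q = 0) (hup : u ≤ p.toSubmodule) (hHp : H ≤ p) :
    LieSubalgebra R (H × L) where
  toSubmodule := fissionSubmodule H u
  lie_mem' {P Q} hP hQ :=
    lie_sub_lie_mem (fun _ hx _ hy => lie_mem_of_mem_orthogonal hBinv hu hx hy) hup
      (hHp P.1.2) (hHp Q.1.2) hP hQ

theorem sub_mem_orthogonal_of_orthogonal (hsymm : ∀ x y : L, B x y = B y x)
    (hu : ∀ x, x ∈ u ↔ ∀ q ∈ p, B x q = 0) (hHp : H ≤ p)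
    (hpuH : p.toSubmodule ≤ u ⊔ H.toSubmodule) {x y : L} (hx : x ∈ H)
    (hyu : ∀ v ∈ u, B y v = 0) (hxyH : ∀ h ∈ H, B x h - B y h = 0) : y - x ∈ u := by
  rw [hu]
  intro q hq
  obtain ⟨v, hv, h, hh, rfl⟩ := Submodule.mem_sup.mp (hpuH hq)
  have hxv : B x v = 0 := by rw [hsymm]; exact (hu v).mp hv x (hHp hx)
  simp only [map_add, map_sub, LinearMap.sub_apply, hyu v hv, hxv]
  linear_combination -hxyH h hh

theorem fissionSubmodule_coisotropic (hsymm : ∀ x y : L, B x y = B y x)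
    (hu : ∀ x, x ∈ u ↔ ∀ q ∈ p, B x q = 0) (hHp : H ≤ p)
    (hpuH : p.toSubmodule ≤ u ⊔ H.toSubmodule) (P : H × L)
    (hP : ∀ Q ∈ fissionSubmodule H u, B (P.1 : L) (Q.1 : L) - B P.2 Q.2 = 0) :
    P ∈ fissionSubmodule H u :=
  sub_mem_orthogonal_of_orthogonal hsymm hu hHp hpuH P.1.2
    (fun v hv => by simpa using hP (0, v) (by simpa using hv))
    (fun h hh => hP (⟨h, hh⟩, h) (by simp))

end Fission

theorem fission_subgroups_coisotropic_general {L : Type*} [LieRing L] [LieAlgebra ℝ L]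
    (B : LinearMap.BilinForm ℝ L)
    (hsymm : ∀ x y : L, B x y = B y x)
    (hBinv : ∀ ξ η ζ : L, B ⁅ξ, η⁆ ζ + B η ⁅ξ, ζ⁆ = 0)
    (pP pM : LieSubalgebra ℝ L) (uP uM : Submodule ℝ L)
    (huP : (uP : Set L) = {x : L | ∀ p ∈ pP, B x p = 0})
    (huM : (uM : Set L) = {x : L | ∀ p ∈ pM, B x p = 0})
    (huPsub : ∀ x ∈ uP, x ∈ pP)
    (huMsub : ∀ x ∈ uM, x ∈ pM)
    (hdirect : DirectSum.IsInternal
      (![uP, (pP ⊓ pM : LieSubalgebra ℝ L).toSubmodule, uM] : Fin 3 → Submodule ℝ L)) :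
    -- `𝔠₊` is a Lie subalgebra of `𝔥 ⊕ 𝔤` ...
    (∃ K : LieSubalgebra ℝ (↥(pP ⊓ pM) × L),
        (K : Set (↥(pP ⊓ pM) × L)) = {p : ↥(pP ⊓ pM) × L | p.2 - (p.1 : L) ∈ uP}) ∧
    -- ... which is coisotropic with respect to `B̃`
    (∀ p : ↥(pP ⊓ pM) × L,
        (∀ q : ↥(pP ⊓ pM) × L, q.2 - (q.1 : L) ∈ uP →
          B (p.1 : L) (q.1 : L) - B p.2 q.2 = 0) →
        p.2 - (p.1 : L) ∈ uP) ∧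
    -- and likewise for `𝔠₋`:
    (∃ K : LieSubalgebra ℝ (↥(pP ⊓ pM) × L),
        (K : Set (↥(pP ⊓ pM) × L)) = {p : ↥(pP ⊓ pM) × L | p.2 - (p.1 : L) ∈ uM}) ∧
    (∀ p : ↥(pP ⊓ pM) × L,
        (∀ q : ↥(pP ⊓ pM) × L, q.2 - (q.1 : L) ∈ uM →
          B (p.1 : L) (q.1 : L) - B p.2 q.2 = 0) →
        p.2 - (p.1 : L) ∈ uM) := by
  have huP' (x : L) : x ∈ uP ↔ ∀ p ∈ pP, B x p = 0 := Set.ext_iff.mp huP x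
  have huM' (x : L) : x ∈ uM ↔ ∀ p ∈ pM, B x p = 0 := Set.ext_iff.mp huM x
  have htop : uP ⊔ (pP ⊓ pM).toSubmodule ⊔ uM = ⊤ := by
    simpa using hdirect.submodule_iSup_eq_top
  have hpP : pP.toSubmodule ≤ uP ⊔ (pP ⊓ pM).toSubmodule :=
    le_sup_of_inf_le_of_le_sup huPsub inf_le_left (fun x hx => ⟨hx.1, huMsub _ hx.2⟩)
      (htop ▸ le_top)
  have hpM : pM.toSubmodule ≤ uM ⊔ (pP ⊓ pM).toSubmodule :=
    le_sup_of_inf_le_of_le_sup huMsub inf_le_right (fun x hx => ⟨huPsub _ hx.2, hx.1⟩)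
      (le_top.trans_eq (by rw [← htop]; ac_rfl))
  exact ⟨⟨fissionSubalgebra B hBinv huP' huPsub inf_le_left, rfl⟩,
    fissionSubmodule_coisotropic hsymm huP' inf_le_left hpP,
    ⟨fissionSubalgebra B hBinv huM' huMsub inf_le_right, rfl⟩,
    fissionSubmodule_coisotropic hsymm huM' inf_le_right hpM⟩

/-- Given a Manin-pair-type decomposition `𝔤 = 𝔲₊ ⊕ 𝔥 ⊕ 𝔲₋` with `𝔭±^⊥ = 𝔲± ⊆ 𝔭±` and
`𝔥 = 𝔭₊ ∩ 𝔭₋`, the sets `𝔠± = {(x, y) ∈ 𝔥 ⊕ 𝔤 : y − x ∈ 𝔲±}` are Lie subalgebras of the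
direct-sum Lie algebra `𝔥 ⊕ 𝔤` which are coisotropic for `B̃((x,y),(x',y')) = B(x,x') − B(y,y')`. -/
theorem fission_subgroups_coisotropic {L : Type*} [LieRing L] [LieAlgebra ℝ L]
    [FiniteDimensional ℝ L]
    (B : LinearMap.BilinForm ℝ L)
    (hsymm : ∀ x y : L, B x y = B y x)
    (hnd : ∀ x : L, (∀ y : L, B x y = 0) → x = 0)
    (hBinv : ∀ ξ η ζ : L, B ⁅ξ, η⁆ ζ + B η ⁅ξ, ζ⁆ = 0)
    (pP pM : LieSubalgebra ℝ L) (uP uM : Submodule ℝ L)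
    (huP : (uP : Set L) = {x : L | ∀ p ∈ pP, B x p = 0})
    (huM : (uM : Set L) = {x : L | ∀ p ∈ pM, B x p = 0})
    (huPsub : ∀ x ∈ uP, x ∈ pP)
    (huMsub : ∀ x ∈ uM, x ∈ pM)
    (hdirect : DirectSum.IsInternal
      (![uP, (pP ⊓ pM : LieSubalgebra ℝ L).toSubmodule, uM] : Fin 3 → Submodule ℝ L)) :
    -- `𝔠₊` is a Lie subalgebra of `𝔥 ⊕ 𝔤` ...
    (∃ K : LieSubalgebra ℝ (↥(pP ⊓ pM) × L),
        (K : Set (↥(pP ⊓ pM) × L)) = {p : ↥(pP ⊓ pM) × L | p.2 - (p.1 : L) ∈ uP}) ∧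
    -- ... which is coisotropic with respect to `B̃`
    (∀ p : ↥(pP ⊓ pM) × L,
        (∀ q : ↥(pP ⊓ pM) × L, q.2 - (q.1 : L) ∈ uP →
          B (p.1 : L) (q.1 : L) - B p.2 q.2 = 0) →
        p.2 - (p.1 : L) ∈ uP) ∧
    -- and likewise for `𝔠₋`:
    (∃ K : LieSubalgebra ℝ (↥(pP ⊓ pM) × L),
        (K : Set (↥(pP ⊓ pM) × L)) = {p : ↥(pP ⊓ pM) × L | p.2 - (p.1 : L) ∈ uM}) ∧
    (∀ p : ↥(pP ⊓ pM) × L,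
        (∀ q : ↥(pP ⊓ pM) × L, q.2 - (q.1 : L) ∈ uM →
          B (p.1 : L) (q.1 : L) - B p.2 q.2 = 0) →
        p.2 - (p.1 : L) ∈ uM) :=
  fission_subgroups_coisotropic_general B hsymm hBinv pP pM uP uM huP huM huPsub huMsub hdirect
end
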